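/- Let μ and c be real numbers with 0 ≤ μ < 1 and c < μ(μ−1), and let D⁰ be the complex vector space of finitely supported functions ℤ → ℂ with basis (f_n)_{n∈ℤ}. Define operators π(H₃)f_n = (n−μ)·f_n, π(F₊)f_n = √(n² + (1−2μ)n + μ(μ−1) − c)·f_{n+1}, π(F₋)f_n = √((n−1)² + (1−2μ)(n−1) + μ(μ−1) − c)·f_{n−1}. Then for every n ∈ ℤ the radicand n² + (1−2μ)n + μ(μ−1) − c is strictly positive; as operator identities on D⁰: [π(F₊),π(F₋)] = −2π(H₃), [π(H₃),π(F₊)] = π(F₊), [π(H₃),π(F₋)] = −π(F₋); and the Casimir operator π(H₃)² − (1/2)(π(F₊)π(F₋) + π(F₋)π(F₊)) equals c times the identity. -/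

import Mathlib

/-! The operators act diagonally or as weighted shifts on the basis `f_n`, so each relation
reduces to an identity between the weights. Since `π(F₋)π(F₊) f_n = rad n • f_n` and
`π(F₊)π(F₋) f_n = rad (n - 1) • f_n`, everything follows from
`rad n - rad (n - 1) = 2(n - μ)` and `rad n + rad (n - 1) = 2((n - μ)² - c)`, once the radicands
are nonnegative, which holds because `rad n = n(n + 1 - 2μ) + (μ(μ - 1) - c)` and
`n(n + 1 - 2μ) ≥ 0` for every integer `n` when `0 ≤ μ ≤ 1`. -/

noncomputable section

/-- The representation space `D⁰` of the principal/complementary series, with basis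
`(f_n)_{n ∈ ℤ}`. -/
abbrev VZ := ℤ →₀ ℂ

/-- The basis vector `f_n`. -/
def fn (n : ℤ) : VZ := Finsupp.single n 1

/-- Build a linear operator on `VZ` from its values on the basis vectors `f_n`. -/
def mkOpZ (f : ℤ → VZ) : VZ →ₗ[ℂ] VZ :=
  Finsupp.lsum ℂ fun n => LinearMap.toSpanSingleton ℂ VZ (f n)

/-- The radicand `n² + (1-2μ)n + μ(μ-1) - c`. -/
def rad (μ c : ℝ) (n : ℤ) : ℝ := (n : ℝ) ^ 2 + (1 - 2 * μ) * (n : ℝ) + μ * (μ - 1) - c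

/-- `π_{c,μ}(H₃) f_n = (n-μ) f_n`. -/
def qH3 (μ c : ℝ) : VZ →ₗ[ℂ] VZ := mkOpZ fun n => (((n : ℝ) - μ : ℝ) : ℂ) • fn n

/-- `π_{c,μ}(F₊) f_n = √(n² + (1-2μ)n + μ(μ-1) - c) f_{n+1}`. -/
def qFp (μ c : ℝ) : VZ →ₗ[ℂ] VZ :=
  mkOpZ fun n => ((Real.sqrt (rad μ c n) : ℝ) : ℂ) • fn (n + 1)

/-- `π_{c,μ}(F₋) f_n = √((n-1)² + (1-2μ)(n-1) + μ(μ-1) - c) f_{n-1}`. -/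
def qFm (μ c : ℝ) : VZ →ₗ[ℂ] VZ :=
  mkOpZ fun n => ((Real.sqrt (rad μ c (n - 1)) : ℝ) : ℂ) • fn (n - 1)

@[simp]
lemma mkOpZ_fn (f : ℤ → VZ) (n : ℤ) : mkOpZ f (fn n) = f n := by
  rw [mkOpZ, fn, Finsupp.lsum_single, LinearMap.toSpanSingleton_apply_one]

lemma linearMap_ext_fn {X Y : VZ →ₗ[ℂ] VZ} (h : ∀ n, X (fn n) = Y (fn n)) : X = Y :=
  Finsupp.lhom_ext fun n b => by
    have hb : (Finsupp.single n b : VZ) = b • fn n := by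
      rw [fn, Finsupp.smul_single, smul_eq_mul, mul_one]
    rw [hb, map_smul, map_smul, h]

section

variable (μ c : ℝ) (n : ℤ)

lemma rad_eq : rad μ c n = n * (n + 1 - 2 * μ) + (μ * (μ - 1) - c) := by
  unfold rad; ring

lemma rad_sub_rad_sub_one : rad μ c n - rad μ c (n - 1) = 2 * (n - μ) := by
  unfold rad; push_cast; ring

lemma rad_add_rad_sub_one : rad μ c n + rad μ c (n - 1) = 2 * ((n - μ) ^ 2 - c) := by
  unfold rad; push_cast; ring

lemma int_mul_add_one_sub_two_mul_nonneg {μ : ℝ} (hμ0 : 0 ≤ μ) (hμ1 : μ ≤ 1) :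
    0 ≤ (n : ℝ) * (n + 1 - 2 * μ) := by
  rcases le_or_gt n 0 with hn | hn
  · rcases hn.eq_or_lt with rfl | hn
    · simp
    · have : (n : ℝ) ≤ -1 := by exact_mod_cast Int.le_sub_one_of_lt hn
      exact mul_nonneg_of_nonpos_of_nonpos (by linarith) (by linarith)
  · have : (1 : ℝ) ≤ n := by exact_mod_cast hn
    exact mul_nonneg (by linarith) (by linarith)

lemma rad_pos {μ c : ℝ} (hμ0 : 0 ≤ μ) (hμ1 : μ ≤ 1) (hc : c < μ * (μ - 1)) :
    0 < rad μ c n := by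
  rw [rad_eq]
  linarith [int_mul_add_one_sub_two_mul_nonneg n hμ0 hμ1]

@[simp]
lemma qH3_fn : qH3 μ c (fn n) = (((n : ℝ) - μ : ℝ) : ℂ) • fn n :=
  mkOpZ_fn _ n

@[simp]
lemma qFp_fn : qFp μ c (fn n) = ((√(rad μ c n) : ℝ) : ℂ) • fn (n + 1) :=
  mkOpZ_fn _ n

@[simp]
lemma qFm_fn : qFm μ c (fn n) = ((√(rad μ c (n - 1)) : ℝ) : ℂ) • fn (n - 1) :=
  mkOpZ_fn _ n

variable {μ c n}

lemma qFm_qFp_fn (h : 0 ≤ rad μ c n) :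
    qFm μ c (qFp μ c (fn n)) = ((rad μ c n : ℝ) : ℂ) • fn n := by
  rw [qFp_fn, map_smul, qFm_fn, add_sub_cancel_right, smul_smul, ← Complex.ofReal_mul,
    Real.mul_self_sqrt h]

lemma qFp_qFm_fn (h : 0 ≤ rad μ c (n - 1)) :
    qFp μ c (qFm μ c (fn n)) = ((rad μ c (n - 1) : ℝ) : ℂ) • fn n := by
  rw [qFm_fn, map_smul, qFp_fn, sub_add_cancel, smul_smul, ← Complex.ofReal_mul,
    Real.mul_self_sqrt h]

end

section

variable (μ c : ℝ)

lemma qH3_comp_qFp_sub : qH3 μ c ∘ₗ qFp μ c - qFp μ c ∘ₗ qH3 μ c = qFp μ c := by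
  refine linearMap_ext_fn fun n => ?_
  simp only [LinearMap.sub_apply, LinearMap.comp_apply, qH3_fn, qFp_fn, map_smul, smul_smul,
    ← sub_smul]
  congr 1; push_cast; ring

lemma qH3_comp_qFm_sub : qH3 μ c ∘ₗ qFm μ c - qFm μ c ∘ₗ qH3 μ c = -qFm μ c := by
  refine linearMap_ext_fn fun n => ?_
  simp only [LinearMap.sub_apply, LinearMap.neg_apply, LinearMap.comp_apply, qH3_fn, qFm_fn,
    map_smul, smul_smul, ← sub_smul, ← neg_smul]
  congr 1; push_cast; ring

variable {μ c} (h : ∀ n, 0 ≤ rad μ c n)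
include h

lemma qFp_comp_qFm_sub : qFp μ c ∘ₗ qFm μ c - qFm μ c ∘ₗ qFp μ c = (-2 : ℂ) • qH3 μ c := by
  refine linearMap_ext_fn fun n => ?_
  simp only [LinearMap.sub_apply, LinearMap.smul_apply, LinearMap.comp_apply,
    qFp_qFm_fn (h _), qFm_qFp_fn (h _), qH3_fn, smul_smul, ← sub_smul]
  congr 1
  rw [← Complex.ofReal_sub, ← neg_sub, rad_sub_rad_sub_one]
  push_cast; ring

lemma casimir_eq_smul_id :
    qH3 μ c ∘ₗ qH3 μ c - (2 : ℂ)⁻¹ • (qFp μ c ∘ₗ qFm μ c + qFm μ c ∘ₗ qFp μ c)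
      = ((c : ℝ) : ℂ) • LinearMap.id := by
  refine linearMap_ext_fn fun n => ?_
  simp only [LinearMap.sub_apply, LinearMap.smul_apply, LinearMap.add_apply,
    LinearMap.comp_apply, LinearMap.id_apply, qFp_qFm_fn (h _), qFm_qFp_fn (h _), qH3_fn,
    map_smul, smul_smul, ← add_smul, ← sub_smul]
  congr 1
  rw [← Complex.ofReal_add, add_comm, rad_add_rad_sub_one]
  push_cast; ring

end

/-- For `0 ≤ μ < 1` and `c < μ(μ-1)`, all radicands `n² + (1-2μ)n + μ(μ-1) - c` are
strictly positive, the operators of `π_{c,μ}` satisfy the `so(2,1)` relations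
`[π(F₊),π(F₋)] = -2π(H₃)`, `[π(H₃),π(F₊)] = π(F₊)`, `[π(H₃),π(F₋)] = -π(F₋)`, and the
Casimir operator `π(H₃)² - ½(π(F₊)π(F₋) + π(F₋)π(F₊))` equals `c` times the identity. -/
theorem principal_series_relations (μ c : ℝ) (hμ0 : 0 ≤ μ) (hμ1 : μ < 1)
    (hc : c < μ * (μ - 1)) :
    (∀ n : ℤ, 0 < rad μ c n) ∧
    qFp μ c ∘ₗ qFm μ c - qFm μ c ∘ₗ qFp μ c = (-2 : ℂ) • qH3 μ c ∧
    qH3 μ c ∘ₗ qFp μ c - qFp μ c ∘ₗ qH3 μ c = qFp μ c ∧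
    qH3 μ c ∘ₗ qFm μ c - qFm μ c ∘ₗ qH3 μ c = -qFm μ c ∧
    qH3 μ c ∘ₗ qH3 μ c - (2 : ℂ)⁻¹ • (qFp μ c ∘ₗ qFm μ c + qFm μ c ∘ₗ qFp μ c)
      = ((c : ℝ) : ℂ) • LinearMap.id := by
  have hrad (n : ℤ) : 0 < rad μ c n := rad_pos n hμ0 hμ1.le hc
  have hrad' (n : ℤ) : 0 ≤ rad μ c n := (hrad n).le
  exact ⟨hrad, qFp_comp_qFm_sub hrad', qH3_comp_qFp_sub μ c, qH3_comp_qFm_sub μ c,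
    casimir_eq_smul_id hrad'⟩

end
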